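/- arXiv:1109.4451 — 3 statements merged into one kernel-verified Lean document; each statement's English description precedes it below -/
import Mathlib

section
/- If θ : Fin n → ℝ, A a symmetric 0/1 adjacency matrix with zero diagonal, and the matrix M_{ij} = A_{ij}·cos(θ_j − θ_i) − δ_{ij}·∑_k A_{ik}·cos(θ_k − θ_i) is negative semidefinite, then for every subset S of nodes, ∑_{i∈S, j∉S} A_{ij}·cos(θ_j − θ_i) ≥ 0. -/
open Matrix

/-! Each row of `M` sums to zero, so testing the quadratic form of `M` on the indicator vector of
`S` leaves exactly minus the weight of the cut between `S` and its complement. -/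

open Finset in
theorem Matrix.indicator_dotProduct_mulVec_indicator {ι R : Type*} [Fintype ι] [DecidableEq ι]
    [CommSemiring R] (M : Matrix ι ι R) (S : Finset ι) :
    (fun i => if i ∈ S then (1 : R) else 0) ⬝ᵥ M *ᵥ (fun i => if i ∈ S then 1 else 0)
      = ∑ i ∈ S, ∑ j ∈ S, M i j := by
  simp only [dotProduct, mulVec, ite_mul, one_mul, zero_mul, mul_ite, mul_one, mul_zero,
    sum_ite_mem, univ_inter]

open Finset in
theorem Matrix.sum_sum_of_sub_diagonal_rowSum {ι R : Type*} [Fintype ι] [DecidableEq ι]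
    [CommRing R] (w : ι → ι → R) (S : Finset ι) :
    ∑ i ∈ S, ∑ j ∈ S, (of w - diagonal fun i => ∑ k, w i k) i j
      = -∑ i ∈ S, ∑ j ∈ Sᶜ, w i j := by
  rw [← sum_neg_distrib]
  refine sum_congr rfl fun i hi => ?_
  simp only [sub_apply, of_apply, diagonal_apply, sum_sub_distrib, sum_ite_eq, if_pos hi,
    ← sum_add_sum_compl S (w i)]
  ring

theorem stmt_2_general (n : ℕ) (θ : Fin n → ℝ) (A : Fin n → Fin n → ℝ)
    (M : Matrix (Fin n) (Fin n) ℝ)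
    (hM : ∀ i j, M i j = A i j * Real.cos (θ j - θ i)
        - (if i = j then (1:ℝ) else 0) * ∑ k, A i k * Real.cos (θ k - θ i))
    (hnsd : ∀ z : Fin n → ℝ, z ⬝ᵥ M.mulVec z ≤ 0)
    (S : Finset (Fin n)) :
    0 ≤ ∑ i ∈ S, ∑ j ∈ Sᶜ, A i j * Real.cos (θ j - θ i) := by
  have hM' : M = of (fun i j => A i j * Real.cos (θ j - θ i))
      - diagonal fun i => ∑ k, A i k * Real.cos (θ k - θ i) := by
    ext i j
    by_cases hij : i = j <;> simp [hM, hij]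
  have h := hnsd fun i => if i ∈ S then 1 else 0
  rw [indicator_dotProduct_mulVec_indicator, hM', sum_sum_of_sub_diagonal_rowSum] at h
  linarith

theorem stmt_2 (n : ℕ) (θ : Fin n → ℝ) (A : Fin n → Fin n → ℝ)
    (hA01 : ∀ i j, A i j = 0 ∨ A i j = 1)
    (hAsymm : ∀ i j, A i j = A j i)
    (hAdiag : ∀ i, A i i = 0)
    (M : Matrix (Fin n) (Fin n) ℝ)
    (hM : ∀ i j, M i j = A i j * Real.cos (θ j - θ i)
        - (if i = j then (1:ℝ) else 0) * ∑ k, A i k * Real.cos (θ k - θ i))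
    (hnsd : ∀ z : Fin n → ℝ, z ⬝ᵥ M.mulVec z ≤ 0)
    (S : Finset (Fin n)) :
    0 ≤ ∑ i ∈ S, ∑ j ∈ Sᶜ, A i j * Real.cos (θ j - θ i) :=
  stmt_2_general n θ A M hM hnsd S
end

section
/- Let θ : Fin n → ℝ satisfy ∑_{i≠m} sin(θ_i − θ_m) = 0 for all m, and suppose p = ∑_j exp(i·θ_j) ≠ 0. Then there exists an angle φ such that for every m, θ_m ≡ φ (mod 2π) or θ_m ≡ φ + π (mod 2π). -/
/-! The fixed-point equation at `m` says exactly that `p · exp(-i θ_m)` is real, since its imaginary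
part is `∑ᵢ sin(θ_i - θ_m)` (the `i = m` term vanishes). Writing `p = ‖p‖ exp(i arg p)` with
`p ≠ 0`, this means `sin(arg p - θ_m) = 0`, so every `θ_m` lies in `arg p + π ℤ`. -/

open Real Complex

theorem Complex.im_mul_exp_neg_mul_I (z : ℂ) (x : ℝ) :
    (z * exp (-x * I)).im = ‖z‖ * Real.sin (arg z - x) := by
  conv_lhs => rw [← norm_mul_exp_arg_mul_I z]
  rw [mul_assoc, ← Complex.exp_add,
    show (arg z : ℂ) * I + -x * I = ((arg z - x : ℝ) : ℂ) * I by push_cast; ring]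
  simp only [mul_im, ofReal_re, ofReal_im, exp_ofReal_mul_I_im, exp_ofReal_mul_I_re, zero_mul,
    add_zero]

theorem Complex.im_sum_exp_mul_I_mul_exp_neg_mul_I {ι : Type*} [Fintype ι] (θ : ι → ℝ) (x : ℝ) :
    ((∑ j, exp (θ j * I)) * exp (-x * I)).im = ∑ j, Real.sin (θ j - x) := by
  rw [Finset.sum_mul, im_sum]
  refine Finset.sum_congr rfl fun j _ => ?_
  rw [← Complex.exp_add, show (θ j : ℂ) * I + -x * I = ((θ j - x : ℝ) : ℂ) * I by push_cast; ring,
    exp_ofReal_mul_I_im]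

theorem Real.eq_add_two_pi_mul_or_eq_add_pi_add_two_pi_mul_of_sin_sub_eq_zero {φ x : ℝ}
    (h : Real.sin (φ - x) = 0) :
    (∃ k : ℤ, x = φ + 2 * π * k) ∨ (∃ k : ℤ, x = φ + π + 2 * π * k) := by
  obtain ⟨k, hk⟩ := Real.sin_eq_zero_iff.mp h
  rcases Int.even_or_odd' k with ⟨l, rfl | rfl⟩
  · exact .inl ⟨-l, by push_cast at hk ⊢; linarith⟩
  · exact .inr ⟨-l - 1, by push_cast at hk ⊢; linarith⟩

theorem stmt_5 (n : ℕ) (θ : Fin n → ℝ)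
    (hfix : ∀ m : Fin n, ∑ i ∈ ({m} : Finset (Fin n))ᶜ, Real.sin (θ i - θ m) = 0)
    (hp : (∑ j, Complex.exp (θ j * Complex.I)) ≠ 0) :
    ∃ φ : ℝ, ∀ m : Fin n,
      (∃ k : ℤ, θ m = φ + 2 * π * k) ∨ (∃ k : ℤ, θ m = φ + π + 2 * π * k) := by
  set p : ℂ := ∑ j, Complex.exp (θ j * Complex.I)
  refine ⟨arg p, fun m => eq_add_two_pi_mul_or_eq_add_pi_add_two_pi_mul_of_sin_sub_eq_zero ?_⟩
  have hsum : ∑ i, Real.sin (θ i - θ m) = 0 := by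
    rw [Fintype.sum_eq_add_sum_compl m, hfix m, sub_self, Real.sin_zero, add_zero]
  have him := im_mul_exp_neg_mul_I p (θ m)
  rw [im_sum_exp_mul_I_mul_exp_neg_mul_I, hsum] at him
  exact (mul_eq_zero.mp him.symm).resolve_left (norm_ne_zero_iff.mpr hp)
end

section
/- For the complete network homogeneous Kuramoto model, any fixed point θ satisfying the stability necessary condition ∑_{i∈S, j∉S} cos(θ_j − θ_i) ≥ 0 for all nonempty proper subsets S must have all phase differences equal to zero modulo 2π. Formally: if n ≥ 2, θ : Fin n → ℝ satisfies ∑_{i≠m} sin(θ_i − θ_m) = 0 for all m and ∑_{i∈S, j∉S} cos(θ_j − θ_i) ≥ 0 for every nonempty proper S ⊆ Fin n, then θ_i ≡ θ_j (mod 2π) for all i, j. -/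
/-!
Let `z = ∑ⱼ e^{iθⱼ}` be the order parameter and `w_m = z e^{-iθ_m} = ∑ⱼ e^{i(θⱼ - θ_m)}`.
The fixed-point equation at `m` says `Im w_m = 0`, and the cut inequality for the singleton `{m}`
says `Re w_m ≥ 1`. Hence `w_m` is a positive real, so `w_m = ‖w_m‖ = ‖z‖` and
`z = ‖z‖ e^{iθ_m}` for every `m`. As `z ≠ 0`, all the `e^{iθ_m}` coincide.
-/

open Real Complex

open scoped ComplexOrder in
lemma Complex.eq_norm_mul_exp_of_mul_exp_neg_nonneg {z : ℂ} {t : ℝ}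
    (h : 0 ≤ z * cexp (-(t * I))) : z = ‖z‖ * cexp (t * I) := by
  have hw := eq_coe_norm_of_nonneg h
  rw [norm_mul, ← neg_mul, ← ofReal_neg, norm_exp_ofReal_mul_I, mul_one] at hw
  rw [← hw, ofReal_neg, neg_mul, mul_assoc, ← Complex.exp_add, neg_add_cancel, exp_zero, mul_one]

lemma Real.exists_int_sub_eq_two_pi_mul_of_exp_mul_I_eq {a b : ℝ}
    (h : cexp (a * I) = cexp (b * I)) : ∃ k : ℤ, a - b = 2 * π * k := by
  obtain ⟨k, hk⟩ := exp_eq_exp_iff_exists_int.mp h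
  refine ⟨k, ?_⟩
  have him : a = b + k * (2 * π) := by simpa using congrArg Complex.im hk
  linarith

namespace Kuramoto

variable {ι : Type*} [Fintype ι] (θ : ι → ℝ)

noncomputable def orderParameter : ℂ := ∑ j, cexp (θ j * I)

lemma orderParameter_mul_exp_neg (m : ι) :
    orderParameter θ * cexp (-(θ m * I)) = ∑ j, cexp (↑(θ j - θ m) * I) := by
  simp only [orderParameter, Finset.sum_mul, ← Complex.exp_add]
  congr! 2
  push_cast
  ring

lemma re_orderParameter_mul_exp_neg (m : ι) :
    (orderParameter θ * cexp (-(θ m * I))).re = ∑ j, Real.cos (θ j - θ m) := by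
  simp only [orderParameter_mul_exp_neg, re_sum, exp_ofReal_mul_I_re]

lemma im_orderParameter_mul_exp_neg (m : ι) :
    (orderParameter θ * cexp (-(θ m * I))).im = ∑ j, Real.sin (θ j - θ m) := by
  simp only [orderParameter_mul_exp_neg, im_sum, exp_ofReal_mul_I_im]

variable [DecidableEq ι] {θ} {m : ι}

lemma one_le_re_orderParameter_mul_exp_neg
    (hcut : 0 ≤ ∑ j ∈ ({m} : Finset ι)ᶜ, Real.cos (θ j - θ m)) :
    1 ≤ (orderParameter θ * cexp (-(θ m * I))).re := by
  rw [re_orderParameter_mul_exp_neg, Fintype.sum_eq_add_sum_compl m, sub_self, Real.cos_zero]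
  linarith

lemma orderParameter_ne_zero (hcut : 0 ≤ ∑ j ∈ ({m} : Finset ι)ᶜ, Real.cos (θ j - θ m)) :
    orderParameter θ ≠ 0 := by
  intro h
  have h1 := one_le_re_orderParameter_mul_exp_neg hcut
  rw [h, zero_mul, zero_re] at h1
  linarith

lemma orderParameter_eq_norm_mul_exp
    (hfix : ∑ i ∈ ({m} : Finset ι)ᶜ, Real.sin (θ i - θ m) = 0)
    (hcut : 0 ≤ ∑ j ∈ ({m} : Finset ι)ᶜ, Real.cos (θ j - θ m)) :
    orderParameter θ = ‖orderParameter θ‖ * cexp (θ m * I) := by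
  refine Complex.eq_norm_mul_exp_of_mul_exp_neg_nonneg (Complex.nonneg_iff.mpr ⟨?_, ?_⟩)
  · linarith [one_le_re_orderParameter_mul_exp_neg hcut]
  · rw [im_orderParameter_mul_exp_neg, Fintype.sum_eq_add_sum_compl m, hfix, sub_self,
      Real.sin_zero, add_zero]

end Kuramoto

theorem stmt_8 (n : ℕ) (hn : 2 ≤ n) (θ : Fin n → ℝ)
    (hfix : ∀ m : Fin n, ∑ i ∈ ({m} : Finset (Fin n))ᶜ, Real.sin (θ i - θ m) = 0)
    (hstab : ∀ S : Finset (Fin n), S.Nonempty → S ≠ Finset.univ →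
      0 ≤ ∑ i ∈ S, ∑ j ∈ Sᶜ, Real.cos (θ j - θ i)) :
    ∀ i j : Fin n, ∃ k : ℤ, θ i - θ j = 2 * π * k := by
  have : Nontrivial (Fin n) := Fin.nontrivial_iff_two_le.mpr hn
  have hcut (m : Fin n) : 0 ≤ ∑ j ∈ ({m} : Finset (Fin n))ᶜ, Real.cos (θ j - θ m) := by
    simpa only [Finset.sum_singleton] using
      hstab {m} (Finset.singleton_nonempty m) (Finset.singleton_ne_univ m)
  have hpolar (m : Fin n) := Kuramoto.orderParameter_eq_norm_mul_exp (hfix m) (hcut m)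
  have hz : Kuramoto.orderParameter θ ≠ 0 := Kuramoto.orderParameter_ne_zero (hcut ⟨0, by omega⟩)
  intro i j
  exact Real.exists_int_sub_eq_two_pi_mul_of_exp_mul_I_eq <| mul_left_cancel₀
    (ofReal_ne_zero.mpr (norm_ne_zero_iff.mpr hz)) ((hpolar i).symm.trans (hpolar j))
end
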